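/- For an a-sequence u, the following are equivalent: (a) the ratio sequence (q_n) is bounded; (b) t_u(T) ⊆ Q/Z; (c) t_u(T) is countable; (d) t_u(T) is an F_σ-subset of T. In particular, if u is an a-sequence with unbounded ratios (e.g., u_n = n! or u_n = 2^{2^n}), then t_u(T) is not an F_σ-subset of T. -/

import Mathlib

/-!
If the ratios `q_n` are bounded by `C`, then as soon as `‖u_n x‖ ≤ 1 / (2C)` the norms
`‖u_n x‖` can only grow with `n`; so `u_n x → 0` forces `u_N x = 0`, every point of `t_u(𝕋)` is
torsion, and the torsion subgroup `ℚ/ℤ` is countable, hence `F_σ`.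

Conversely, the metric `max (‖x - y‖, sup_n ‖u_n (x - y)‖)` makes `t_u(𝕋)` complete (it is the
graph of `x ↦ (u_n x)_n` in `𝕋 × C₀(ℕ, 𝕋)`) and refines the topology of `𝕋`. If
`t_u(𝕋) = ⋃ F_i` with `F_i` closed, Baire category yields a ball `x₀ + B` of this metric inside
some `F_i`. When the ratios are unbounded, the partial sums of `y = ∑ ⌊δ q_{n+1}⌋ / u_{n+1}` lie
in `B ∩ t_u(𝕋)`, so `x₀ + y ∈ F_i ⊆ t_u(𝕋)`; but `‖u_n y‖ ≥ δ / 2` whenever `q_{n+1} ≥ 2 / δ`,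
so `y ∉ t_u(𝕋)`.
-/

open Filter Topology

/-- The subgroup `t_u(G)` of topologically `u`-torsion elements. -/
def topologicalTorsion (u : ℕ → ℕ) (G : Type*) [AddCommGroup G] [TopologicalSpace G]
    [IsTopologicalAddGroup G] : AddSubgroup G where
  carrier := {x | Tendsto (fun n => (u n : ℤ) • x) atTop (𝓝 0)}
  zero_mem' := by simpa using tendsto_const_nhds
  add_mem' hx hy := by simpa [smul_add] using hx.add hy
  neg_mem' hx := by simpa using hx.neg

namespace AddCircle

theorem exists_coe_eq_and_norm_eq_abs {p : ℝ} (x : AddCircle p) :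
    ∃ t : ℝ, (t : AddCircle p) = x ∧ ‖x‖ = |t| := by
  induction x using QuotientAddGroup.induction_on with
  | H s =>
    refine ⟨s - round (p⁻¹ * s) * p, ?_, norm_eq p⟩
    rw [coe_sub, sub_eq_self, coe_eq_zero_iff]
    exact ⟨round (p⁻¹ * s), zsmul_eq_mul _ _⟩

theorem norm_nsmul_eq_mul_norm {p : ℝ} (hp : p ≠ 0) {x : AddCircle p} {k : ℕ}
    (h : k * ‖x‖ ≤ |p| / 2) : ‖k • x‖ = k * ‖x‖ := by
  obtain ⟨t, rfl, ht⟩ := x.exists_coe_eq_and_norm_eq_abs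
  rw [ht] at h ⊢
  rw [← coe_nsmul, nsmul_eq_mul, (norm_coe_eq_abs_iff p hp).2, abs_mul, Nat.abs_cast]
  rwa [abs_mul, Nat.abs_cast]

theorem countable_setOf_isOfFinAddOrder (p : ℝ) [Fact (0 < p)] :
    {x : AddCircle p | IsOfFinAddOrder x}.Countable := by
  refine (Set.countable_range fun q : ℚ => ((q * p : ℝ) : AddCircle p)).mono fun x hx => ?_
  induction x using QuotientAddGroup.induction_on with
  | H s =>
    obtain ⟨q, hq⟩ := isOfFinAddOrder_iff_exists_rat_eq_div.1 hx
    exact ⟨q, by simp only [hq, div_mul_cancel₀ s (Fact.out : 0 < p).ne']⟩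

end AddCircle

theorem Set.Countable.exists_eq_iUnion_isClosed {X : Type*} [TopologicalSpace X] [T1Space X]
    {s : Set X} (hs : s.Countable) :
    ∃ F : ℕ → Set X, (∀ i, IsClosed (F i)) ∧ s = ⋃ i, F i := by
  rcases s.eq_empty_or_nonempty with rfl | hne
  · exact ⟨fun _ => ∅, fun _ => isClosed_empty, by simp⟩
  · obtain ⟨f, rfl⟩ := hs.exists_eq_range hne
    exact ⟨fun i => {f i}, fun _ => isClosed_singleton, Set.range_eq_iUnion f⟩

theorem isOfFinAddOrder_of_mem_topologicalTorsion {u : ℕ → ℕ} (hpos : ∀ n, 0 < u n)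
    (hdvd : ∀ n, u n ∣ u (n + 1)) {C : ℕ} (hC : ∀ n, u (n + 1) ≤ C * u n) {p : ℝ} (hp : p ≠ 0)
    {x : AddCircle p} (hx : x ∈ topologicalTorsion u (AddCircle p)) : IsOfFinAddOrder x := by
  have hx' : Tendsto (fun n => ‖u n • x‖) atTop (𝓝 0) := by
    simpa only [natCast_zsmul, norm_zero] using (hx : Tendsto _ _ _).norm
  have hhalf : (C : ℝ) * 0 < |p| / 2 := by simpa using half_pos (abs_pos.2 hp)
  obtain ⟨N, hN⟩ := eventually_atTop.1 <| (hx'.const_mul (C : ℝ)).eventually (ge_mem_nhds hhalf)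
  -- Beyond `N` each step multiplies the norm by the ratio `u (n + 1) / u n ≥ 1`.
  have hmono : Monotone fun k => ‖u (k + N) • x‖ := by
    refine monotone_nat_of_le_succ fun k => ?_
    obtain ⟨q, hq⟩ := hdvd (k + N)
    have hq1 : 1 ≤ q := Nat.pos_of_ne_zero fun h => (hpos (k + N + 1)).ne' (by simp [hq, h])
    have hqC : q ≤ C := Nat.le_of_mul_le_mul_left (by rw [← hq, mul_comm]; exact hC _) (hpos _)
    calc ‖u (k + N) • x‖ ≤ q * ‖u (k + N) • x‖ :=
          le_mul_of_one_le_left (norm_nonneg _) (by exact_mod_cast hq1)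
      _ = ‖q • u (k + N) • x‖ := by
          refine (AddCircle.norm_nsmul_eq_mul_norm hp ((mul_le_mul_of_nonneg_right ?_
            (norm_nonneg _)).trans (hN _ (Nat.le_add_left _ _)))).symm
          exact_mod_cast hqC
      _ = ‖u (k + 1 + N) • x‖ := by rw [← mul_nsmul, Nat.add_right_comm, hq, mul_comm]
  have hzero : ‖u N • x‖ ≤ 0 := by
    simpa using hmono.ge_of_tendsto ((tendsto_add_atTop_iff_nat N).2 hx') 0
  exact isOfFinAddOrder_iff_nsmul_eq_zero.2 ⟨u N, hpos N, norm_le_zero_iff.1 hzero⟩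

section Baire

open ZeroAtInfty

variable {G : Type*} [NormedAddCommGroup G] {u : ℕ → ℕ}

def torsionGraph (u : ℕ → ℕ) (G : Type*) [NormedAddCommGroup G] : Set (G × C₀(ℕ, G)) :=
  {z | ∀ n, z.2 n = (u n : ℤ) • z.1}

theorem isClosed_torsionGraph : IsClosed (torsionGraph u G) := by
  rw [torsionGraph, Set.ofPred_forall]
  refine isClosed_iInter fun n => isClosed_eq ?_ (by fun_prop)
  have h : Continuous fun g : C₀(ℕ, G) => g n :=
    (continuous_eval_const (F := BoundedContinuousFunction ℕ G) n).comp
      ZeroAtInftyContinuousMap.isometry_toBCF.continuous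
  exact h.comp continuous_snd

theorem mem_topologicalTorsion_of_mem_torsionGraph {z : G × C₀(ℕ, G)}
    (hz : z ∈ torsionGraph u G) : z.1 ∈ topologicalTorsion u G := by
  have h := zero_at_infty z.2
  rw [cocompact_eq_atTop] at h
  exact h.congr hz

theorem exists_mem_torsionGraph {x : G} (hx : x ∈ topologicalTorsion u G) :
    ∃ g : C₀(ℕ, G), (x, g) ∈ torsionGraph u G :=
  ⟨⟨⟨fun n => (u n : ℤ) • x, continuous_of_discreteTopology⟩,
    by rw [cocompact_eq_atTop]; exact hx⟩, fun _ => rfl⟩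

theorem dist_le_of_mem_torsionGraph {z w : G × C₀(ℕ, G)} (hz : z ∈ torsionGraph u G)
    (hw : w ∈ torsionGraph u G) {ε : ℝ} (h1 : ‖z.1 - w.1‖ ≤ ε)
    (h2 : ∀ n, ‖(u n : ℤ) • (z.1 - w.1)‖ ≤ ε) : dist z w ≤ ε := by
  rw [Prod.dist_eq, dist_eq_norm]
  refine max_le h1 ?_
  rw [← ZeroAtInftyContinuousMap.dist_toBCF_eq_dist,
    BoundedContinuousFunction.dist_le ((norm_nonneg _).trans h1)]
  intro n
  simpa [dist_eq_norm, hz n, hw n, smul_sub] using h2 n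

theorem exists_add_mem_of_topologicalTorsion_eq_iUnion [CompleteSpace G] {F : ℕ → Set G}
    (hF : ∀ i, IsClosed (F i)) (hU : (topologicalTorsion u G : Set G) = ⋃ i, F i) :
    ∃ i x₀, ∃ ε > 0, ∀ y ∈ topologicalTorsion u G, ‖y‖ ≤ ε →
      (∀ n, ‖(u n : ℤ) • y‖ ≤ ε) → x₀ + y ∈ F i := by
  have : IsClosed (torsionGraph u G) := isClosed_torsionGraph
  obtain ⟨g₀, hg₀⟩ := exists_mem_torsionGraph (zero_mem (topologicalTorsion u G))
  have : Nonempty (torsionGraph u G) := ⟨⟨(0, g₀), hg₀⟩⟩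
  have hcover : ⋃ i, {z : torsionGraph u G | z.1.1 ∈ F i} = Set.univ := by
    refine Set.eq_univ_of_forall fun z => ?_
    simpa [← Set.mem_iUnion (s := F), ← hU] using mem_topologicalTorsion_of_mem_torsionGraph z.2
  obtain ⟨i, z₀, hz₀⟩ := nonempty_interior_of_iUnion_of_closed
    (fun i => (hF i).preimage (by fun_prop)) hcover
  obtain ⟨ε, hε, hball⟩ := Metric.mem_nhds_iff.1 (mem_interior_iff_mem_nhds.1 hz₀)
  refine ⟨i, z₀.1.1, ε / 2, half_pos hε, fun y hy hy1 hy2 => ?_⟩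
  obtain ⟨g, hg⟩ := exists_mem_torsionGraph
    (add_mem (mem_topologicalTorsion_of_mem_torsionGraph z₀.2) hy)
  refine hball (show (⟨(z₀.1.1 + y, g), hg⟩ : torsionGraph u G) ∈ Metric.ball z₀ ε from
    (dist_le_of_mem_torsionGraph hg z₀.2 ?_ ?_).trans_lt (half_lt_self hε))
  · simpa using hy1
  · simpa using hy2

end Baire

section Expansion

variable {u : ℕ → ℕ} {δ : ℝ} {r : ℕ → ℝ}

theorem two_mul_le_of_strictMono_of_dvd (hu : StrictMono u) (hdvd : ∀ n, u n ∣ u (n + 1))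
    (n : ℕ) : 2 * u n ≤ u (n + 1) := by
  obtain ⟨q, hq⟩ := hdvd n
  have hq2 : 2 ≤ q :=
    Nat.lt_of_mul_lt_mul_left (a := u n) (by rw [mul_one, ← hq]; exact hu n.lt_succ_self)
  calc 2 * u n ≤ q * u n := Nat.mul_le_mul_right _ hq2
    _ = u (n + 1) := by rw [hq, mul_comm]

theorem two_pow_mul_le_add (h2 : ∀ n, 2 * u n ≤ u (n + 1)) (m k : ℕ) :
    2 ^ k * u m ≤ u (k + m) := by
  induction k with
  | zero => simp
  | succ k ih =>
    calc 2 ^ (k + 1) * u m = 2 * (2 ^ k * u m) := by ring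
      _ ≤ u (k + m + 1) := (Nat.mul_le_mul_left 2 ih).trans (h2 _)
      _ = u (k + 1 + m) := by rw [Nat.add_right_comm]

theorem summable_and_tsum_le_of_le_div_two_pow {f : ℕ → ℝ} (h0 : ∀ k, 0 ≤ f k)
    (h : ∀ k, f k ≤ δ / 2 ^ k) : Summable f ∧ ∑' k, f k ≤ 2 * δ := by
  have hg : HasSum (fun k => δ * (1 / 2) ^ k) (δ * 2) := hasSum_geometric_two.mul_left δ
  have h' : ∀ k, f k ≤ δ * (1 / 2) ^ k := fun k => by simpa [div_eq_mul_inv] using h k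
  have hf : Summable f := hg.summable.of_nonneg_of_le h0 h'
  exact ⟨hf, (hasSum_le h' hf.hasSum hg).trans_eq (mul_comm _ _)⟩

structure IsSmallExpansion (u : ℕ → ℕ) (δ : ℝ) (r : ℕ → ℝ) : Prop where
  nonneg : ∀ n, 0 ≤ r n
  mul_le : ∀ n, u n * r n ≤ δ
  coe_mul_eq_zero : ∀ {m n}, n < m → ((u m * r n : ℝ) : AddCircle (1 : ℝ)) = 0

namespace IsSmallExpansion

theorem truncate (hr : IsSmallExpansion u δ r) (hδ : 0 ≤ δ) (K : ℕ) :
    IsSmallExpansion u δ fun n => if n < K then r n else 0 where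
  nonneg n := by split_ifs <;> simp [hr.nonneg n]
  mul_le n := by split_ifs <;> simp [hr.mul_le n, hδ]
  coe_mul_eq_zero h := by split_ifs <;> simp [hr.coe_mul_eq_zero h]

theorem mul_le_div_two_pow (hr : IsSmallExpansion u δ r) (h2 : ∀ n, 2 * u n ≤ u (n + 1))
    (m k : ℕ) : u m * r (k + m) ≤ δ / 2 ^ k := by
  rw [le_div_iff₀ (by positivity)]
  calc u m * r (k + m) * 2 ^ k = ((2 ^ k * u m : ℕ) : ℝ) * r (k + m) := by push_cast; ring
    _ ≤ u (k + m) * r (k + m) := by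
        gcongr
        · exact hr.nonneg _
        · exact two_pow_mul_le_add h2 m k
    _ ≤ δ := hr.mul_le _

theorem summable_and_tsum_le (hr : IsSmallExpansion u δ r) (hpos : ∀ n, 0 < u n)
    (h2 : ∀ n, 2 * u n ≤ u (n + 1)) : Summable r ∧ ∑' n, r n ≤ 2 * δ := by
  refine summable_and_tsum_le_of_le_div_two_pow hr.nonneg fun n => ?_
  calc r n ≤ u 0 * r (n + 0) := le_mul_of_one_le_left (hr.nonneg n) (by exact_mod_cast hpos 0)
    _ ≤ δ / 2 ^ n := hr.mul_le_div_two_pow h2 0 n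

theorem summable_and_tsum_tail_le (hr : IsSmallExpansion u δ r)
    (h2 : ∀ n, 2 * u n ≤ u (n + 1)) (m : ℕ) :
    Summable (fun k => u m * r (k + m)) ∧ ∑' k, u m * r (k + m) ≤ 2 * δ :=
  summable_and_tsum_le_of_le_div_two_pow (fun _ => mul_nonneg (Nat.cast_nonneg _) (hr.nonneg _))
    (hr.mul_le_div_two_pow h2 m)

-- The terms `u m * r n` with `n < m` are integers, and the tail lies in `[0, 1/2]`.
theorem norm_zsmul_coe_tsum (hr : IsSmallExpansion u δ r) (h2 : ∀ n, 2 * u n ≤ u (n + 1))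
    (hδ : δ ≤ 1 / 4) (m : ℕ) :
    ‖(u m : ℤ) • ((∑' n, r n : ℝ) : AddCircle (1 : ℝ))‖ = ∑' k, u m * r (k + m) := by
  obtain ⟨hsum, hle⟩ := hr.summable_and_tsum_tail_le h2 m
  have hhead : ((∑ n ∈ Finset.range m, u m * r n : ℝ) : AddCircle (1 : ℝ)) = 0 := by
    rw [QuotientAddGroup.mk_sum]
    exact Finset.sum_eq_zero fun n hn => hr.coe_mul_eq_zero (Finset.mem_range.1 hn)
  have htail : 0 ≤ ∑' k, u m * r (k + m) :=
    tsum_nonneg fun _ => mul_nonneg (Nat.cast_nonneg _) (hr.nonneg _)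
  have hsmall : |∑' k, u m * r (k + m)| ≤ |(1 : ℝ)| / 2 := by
    rw [abs_of_nonneg htail, abs_one]
    linarith
  rw [← AddCircle.coe_zsmul, zsmul_eq_mul, Int.cast_natCast, ← tsum_mul_left,
    ← ((summable_nat_add_iff m).1 hsum).sum_add_tsum_nat_add m, AddCircle.coe_add, hhead,
    zero_add, (AddCircle.norm_coe_eq_abs_iff 1 one_ne_zero).2 hsmall, abs_of_nonneg htail]

end IsSmallExpansion

end Expansion

section Construction

variable {u : ℕ → ℕ} {δ : ℝ}

theorem dvd_of_le_of_dvd_succ (hdvd : ∀ n, u n ∣ u (n + 1)) {m n : ℕ} (h : m ≤ n) : u m ∣ u n :=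
  Nat.le_induction dvd_rfl (fun k _ ih => ih.trans (hdvd k)) n h

theorem frequently_mul_lt_of_forall_exists_mul_lt (hu : StrictMono u) (hpos : ∀ n, 0 < u n)
    (hunb : ∀ C : ℕ, ∃ n, C * u n < u (n + 1)) (C : ℕ) :
    ∃ᶠ n in atTop, C * u n < u (n + 1) := by
  refine frequently_atTop.2 fun N => ?_
  obtain ⟨n, hn⟩ := hunb (C + u N)
  refine ⟨n, ?_, lt_of_le_of_lt (Nat.mul_le_mul_right _ (Nat.le_add_right C _)) hn⟩
  by_contra! hnN
  have : u (n + 1) ≤ u N := hu.monotone hnN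
  nlinarith [hpos n]

/-- The `n`-th term `⌊δ q_{n+1}⌋ / u_{n+1}` of the expansion of a point outside `t_u(𝕋)`. -/
noncomputable def expansionTerm (u : ℕ → ℕ) (δ : ℝ) (n : ℕ) : ℝ :=
  ⌊δ * u (n + 1) / u n⌋₊ / u (n + 1)

theorem isSmallExpansion_expansionTerm (hpos : ∀ n, 0 < u n) (hdvd : ∀ n, u n ∣ u (n + 1))
    (hδ : 0 ≤ δ) : IsSmallExpansion u δ (expansionTerm u δ) where
  nonneg n := by unfold expansionTerm; positivity
  mul_le n := by
    have h0 : (0 : ℝ) < u n := by exact_mod_cast hpos n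
    have h1 : (0 : ℝ) < u (n + 1) := by exact_mod_cast hpos (n + 1)
    calc u n * expansionTerm u δ n ≤ u n * (δ * u (n + 1) / u n / u (n + 1)) := by
          unfold expansionTerm
          gcongr
          exact Nat.floor_le (by positivity)
      _ = δ := by field_simp
  coe_mul_eq_zero {m n} h := by
    obtain ⟨j, hj⟩ := dvd_of_le_of_dvd_succ hdvd (Nat.succ_le_of_lt h)
    have h1 : (u (n + 1) : ℝ) ≠ 0 := by exact_mod_cast (hpos (n + 1)).ne'
    rw [AddCircle.coe_eq_zero_iff]
    refine ⟨(j * ⌊δ * u (n + 1) / u n⌋₊ : ℕ), ?_⟩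
    unfold expansionTerm
    rw [hj, zsmul_one]
    push_cast
    field_simp

theorem half_le_mul_expansionTerm (hpos : ∀ n, 0 < u n) {n : ℕ}
    (h : 2 * u n ≤ δ * u (n + 1)) : δ / 2 ≤ u n * expansionTerm u δ n := by
  have h0 : (0 : ℝ) < u n := by exact_mod_cast hpos n
  have h1 : (0 : ℝ) < u (n + 1) := by exact_mod_cast hpos (n + 1)
  set t := δ * u (n + 1) / u n
  have ht : 2 ≤ t := by rwa [le_div_iff₀ h0]
  have hfloor : t / 2 ≤ ⌊t⌋₊ := by linarith [Nat.sub_one_lt_floor t]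
  calc δ / 2 = u n * (t / 2) / u (n + 1) := by simp only [t]; field_simp
    _ ≤ u n * ⌊t⌋₊ / u (n + 1) := by gcongr
    _ = u n * expansionTerm u δ n := by unfold expansionTerm; ring

theorem exists_tendsto_notMem_topologicalTorsion (hu : StrictMono u)
    (hpos : ∀ n, 0 < u n) (hdvd : ∀ n, u n ∣ u (n + 1))
    (hunb : ∀ C : ℕ, ∃ n, C * u n < u (n + 1)) {ε : ℝ} (hε : 0 < ε) (hε' : ε ≤ 1 / 2) :
    ∃ (Y : ℕ → AddCircle (1 : ℝ)) (y : AddCircle (1 : ℝ)),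
      y ∉ topologicalTorsion u (AddCircle (1 : ℝ)) ∧ Tendsto Y atTop (𝓝 y) ∧
      ∀ K, Y K ∈ topologicalTorsion u (AddCircle (1 : ℝ)) ∧ ‖Y K‖ ≤ ε ∧
        ∀ n, ‖(u n : ℤ) • Y K‖ ≤ ε := by
  have h2 := two_mul_le_of_strictMono_of_dvd hu hdvd
  set δ := ε / 2 with hδ
  have hδ0 : 0 < δ := half_pos hε
  have hδ' : δ ≤ 1 / 4 := by linarith
  have hr := isSmallExpansion_expansionTerm hpos hdvd hδ0.le
  set r := expansionTerm u δ
  have hrK := hr.truncate hδ0.le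
  have htrunc (K : ℕ) : ∑' n, (if n < K then r n else 0) = ∑ n ∈ Finset.range K, r n := by
    rw [tsum_eq_sum (s := Finset.range K) fun n hn => if_neg (by simpa using hn)]
    exact Finset.sum_congr rfl fun n hn => if_pos (Finset.mem_range.1 hn)
  refine ⟨fun K => ((∑ n ∈ Finset.range K, r n : ℝ) : AddCircle (1 : ℝ)),
    ((∑' n, r n : ℝ) : AddCircle (1 : ℝ)), fun hy => ?_,
    ((AddCircle.continuous_mk' 1).tendsto _).comp
      (hr.summable_and_tsum_le hpos h2).1.hasSum.tendsto_sum_nat,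
    fun K => ⟨?_, ?_, fun m => ?_⟩⟩
  · obtain ⟨n, hn, hsmall⟩ := ((frequently_mul_lt_of_forall_exists_mul_lt hu hpos hunb
      ⌈2 / δ⌉₊).and_eventually (((hy : Tendsto _ _ _).norm).eventually
        (gt_mem_nhds (show ‖(0 : AddCircle (1 : ℝ))‖ < δ / 2 by simpa using hδ0)))).exists
    have hbig : 2 * (u n : ℝ) ≤ δ * u (n + 1) := by
      have hC : 2 / δ ≤ ⌈2 / δ⌉₊ := Nat.le_ceil _
      have hn' : (⌈2 / δ⌉₊ : ℝ) * u n < u (n + 1) := by exact_mod_cast hn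
      rw [div_le_iff₀ hδ0] at hC
      nlinarith [(Nat.cast_pos.2 (hpos n) : (0 : ℝ) < u n)]
    rw [hr.norm_zsmul_coe_tsum h2 hδ' n] at hsmall
    have hfirst := (hr.summable_and_tsum_tail_le h2 n).1.le_tsum 0
      fun _ _ => mul_nonneg (Nat.cast_nonneg _) (hr.nonneg _)
    rw [zero_add] at hfirst
    linarith [half_le_mul_expansionTerm hpos hbig]
  · dsimp only
    rw [← htrunc K]
    refine tendsto_zero_iff_norm_tendsto_zero.2 (tendsto_const_nhds.congr' ?_)
    filter_upwards [eventually_ge_atTop K] with m hm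
    rw [(hrK K).norm_zsmul_coe_tsum h2 hδ' m]
    simp [show ∀ k, ¬ k + m < K from fun k => by omega]
  · dsimp only
    rw [← htrunc K]
    calc _ ≤ ‖∑' n, (if n < K then r n else 0)‖ := QuotientAddGroup.norm_mk_le_norm
      _ = ∑' n, (if n < K then r n else 0) := Real.norm_of_nonneg (tsum_nonneg (hrK K).nonneg)
      _ ≤ ε := by linarith [((hrK K).summable_and_tsum_le hpos h2).2]
  · dsimp only
    rw [← htrunc K, (hrK K).norm_zsmul_coe_tsum h2 hδ' m]
    linarith [((hrK K).summable_and_tsum_tail_le h2 m).2]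

end Construction

theorem exists_ratio_bound_of_topologicalTorsion_eq_iUnion {u : ℕ → ℕ} (hu : StrictMono u)
    (hpos : ∀ n, 0 < u n) (hdvd : ∀ n, u n ∣ u (n + 1)) {F : ℕ → Set (AddCircle (1 : ℝ))}
    (hF : ∀ i, IsClosed (F i))
    (hU : (topologicalTorsion u (AddCircle (1 : ℝ)) : Set (AddCircle (1 : ℝ))) = ⋃ i, F i) :
    ∃ C : ℕ, ∀ n, u (n + 1) ≤ C * u n := by
  by_contra! hunb
  obtain ⟨i, x₀, ε, hε, hsub⟩ := exists_add_mem_of_topologicalTorsion_eq_iUnion hF hU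
  obtain ⟨Y, y, hy, hYy, hY⟩ := exists_tendsto_notMem_topologicalTorsion hu hpos hdvd hunb
    (lt_min hε one_half_pos) (min_le_right _ _)
  have hF_sub : F i ⊆ topologicalTorsion u (AddCircle (1 : ℝ)) :=
    hU ▸ Set.subset_iUnion F i
  have hx₀ : x₀ ∈ F i := by
    simpa using hsub 0 (zero_mem _) (by simpa using hε.le) (by simpa using hε.le)
  have hx₀y : x₀ + y ∈ F i := (hF i).mem_of_tendsto (tendsto_const_nhds.add hYy) <|
    Eventually.of_forall fun K => hsub _ (hY K).1 ((hY K).2.1.trans (min_le_left _ _))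
      fun n => ((hY K).2.2 n).trans (min_le_left _ _)
  exact hy (by simpa using sub_mem (hF_sub hx₀y) (hF_sub hx₀))

/-- Theorem E: for an a-sequence `u`, the following are equivalent:
(a) the ratio sequence `(q_n)` is bounded; (b) `t_u(𝕋) ⊆ ℚ/ℤ` (every element
of `t_u(𝕋)` is torsion); (c) `t_u(𝕋)` is countable; (d) `t_u(𝕋)` is an
`F_σ`-subset of `𝕋`. In particular, if the ratios are unbounded (e.g. `n!` or
`2^(2^n)`), then `t_u(𝕋)` is not `F_σ`. -/
theorem tu_Fsigma_tfae (u : ℕ → ℕ) (hu : StrictMono u)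
    (hpos : 1 ≤ u 0) (hdvd : ∀ n, u n ∣ u (n + 1)) :
    [(∃ C : ℕ, ∀ n, u (n + 1) ≤ C * u n),
     (∀ x : AddCircle (1 : ℝ),
        Tendsto (fun n => (u n : ℤ) • x) atTop (𝓝 0) → IsOfFinAddOrder x),
     ({x : AddCircle (1 : ℝ) |
        Tendsto (fun n => (u n : ℤ) • x) atTop (𝓝 0)}.Countable),
     (∃ F : ℕ → Set (AddCircle (1 : ℝ)), (∀ i, IsClosed (F i)) ∧
        {x : AddCircle (1 : ℝ) |
          Tendsto (fun n => (u n : ℤ) • x) atTop (𝓝 0)} = ⋃ i, F i)].TFAE := by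
  have hpos' (n : ℕ) : 0 < u n := hpos.trans (hu.monotone n.zero_le)
  tfae_have 1 → 2 := fun ⟨C, hC⟩ x hx =>
    isOfFinAddOrder_of_mem_topologicalTorsion hpos' hdvd hC one_ne_zero hx
  tfae_have 2 → 3 := fun h => (AddCircle.countable_setOf_isOfFinAddOrder 1).mono h
  tfae_have 3 → 4 := Set.Countable.exists_eq_iUnion_isClosed
  tfae_have 4 → 1 := fun ⟨F, hF, hU⟩ =>
    exists_ratio_bound_of_topologicalTorsion_eq_iUnion hu hpos' hdvd hF hU
  tfae_finish
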